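/- Assume the algebraic conditions of Assumption 5.1 (see context). Then H/T is a groupoid with composable pairs (H/T)² = {([γ],[η]) : there exist γ' ∈ [γ], η' ∈ [η] with s(γ') = r(η')}, composition and inversion given by: [γ][η] = {ξ : ξ = γ'η' for some γ' ∈ [γ], η' ∈ [η] with s(γ') = r(η')}, which is itself a single T-orbit (equal to [γ'η'] for any one choice of composable representatives, so composition is well defined and associative), and [γ]⁻¹ = [γ⁻¹] (well defined). Moreover, the range and source of H/T satisfy r([γ]) = [r(γ)] and s([γ]) = [s(γ)], and [γ][γ]⁻¹[γ] = [γ]. -/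

import Mathlib

universe u v w

/-- A groupoid, presented by its set `H` of arrows and its set `U` of units: range and source
maps `r, s : H → U`, a (totalized) partially-defined multiplication which is only meaningful on
composable pairs (`s g = r h`), inversion, and the embedding `unit : U → H` of units. -/
structure RawGroupoid (H : Type u) (U : Type v) where
  r : H → U
  s : H → U
  mul : H → H → H
  inv : H → H
  unit : U → H
  r_unit : ∀ x, r (unit x) = x
  s_unit : ∀ x, s (unit x) = x
  r_mul : ∀ g h, s g = r h → r (mul g h) = r g
  s_mul : ∀ g h, s g = r h → s (mul g h) = s h
  r_inv : ∀ g, r (inv g) = s g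
  s_inv : ∀ g, s (inv g) = r g
  inv_inv : ∀ g, inv (inv g) = g
  mul_assoc : ∀ g h k, s g = r h → s h = r k → mul (mul g h) k = mul g (mul h k)
  unit_mul : ∀ g, mul (unit (r g)) g = g
  mul_unit : ∀ g, mul g (unit (s g)) = g
  inv_mul : ∀ g, mul (inv g) g = unit (s g)
  mul_inv : ∀ g, mul g (inv g) = unit (r g)

/-- A bundle of abelian groups: a surjection `p : T → X` together with a fibrewise abelian
group structure (the multiplication is totalized; it is only meaningful within a fibre). -/
structure AbGroupBundle (T : Type u) (X : Type v) where
  p : T → X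
  p_surj : Function.Surjective p
  e : X → T
  bmul : T → T → T
  binv : T → T
  p_e : ∀ x, p (e x) = x
  p_bmul : ∀ s t, p s = p t → p (bmul s t) = p t
  p_binv : ∀ t, p (binv t) = p t
  bmul_assoc : ∀ s t u, p s = p t → p t = p u → bmul (bmul s t) u = bmul s (bmul t u)
  bmul_comm : ∀ s t, p s = p t → bmul s t = bmul t s
  e_bmul : ∀ t, bmul (e (p t)) t = t
  binv_bmul : ∀ t, bmul (binv t) t = e (p t)

/-- The algebraic conditions of Assumption 5.1: a groupoid `H` whose unit space `U = H⁰` is a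
bundle of abelian groups `p : U → X`, together with commuting free left and right actions
`▶ = actL` and `◀ = actR` of `U` on `H` along the moment maps `p∘r` and `p∘s` respectively, and
maps `λ = lam` and `ρ = rho` intertwining them, satisfying conditions (1a), (1b) and
(2a)–(2f). -/
structure Assumption51 (H : Type u) (U : Type v) (X : Type w) where
  gpd : RawGroupoid H U
  bund : AbGroupBundle U X
  actL : U → H → H
  actR : H → U → H
  lam : H → U → U
  rho : H → U → U
  -- `actL` is a left action of `T = U` on `H` along `p ∘ r`
  actL_id : ∀ γ, actL (bund.e (bund.p (gpd.r γ))) γ = γ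
  actL_mul : ∀ t t' γ, bund.p t = bund.p t' → bund.p t' = bund.p (gpd.r γ) →
    actL (bund.bmul t t') γ = actL t (actL t' γ)
  pr_actL : ∀ t γ, bund.p t = bund.p (gpd.r γ) → bund.p (gpd.r (actL t γ)) = bund.p t
  actL_free : ∀ t γ, bund.p t = bund.p (gpd.r γ) → actL t γ = γ →
    t = bund.e (bund.p (gpd.r γ))
  -- `actR` is a right action of `T = U` on `H` along `p ∘ s`
  actR_id : ∀ γ, actR γ (bund.e (bund.p (gpd.s γ))) = γ
  actR_mul : ∀ γ t t', bund.p t = bund.p (gpd.s γ) → bund.p t' = bund.p t →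
    actR γ (bund.bmul t t') = actR (actR γ t) t'
  ps_actR : ∀ γ t, bund.p t = bund.p (gpd.s γ) → bund.p (gpd.s (actR γ t)) = bund.p t
  actR_free : ∀ γ t, bund.p t = bund.p (gpd.s γ) → actR γ t = γ →
    t = bund.e (bund.p (gpd.s γ))
  -- the two actions commute
  act_comm : ∀ t γ t', bund.p t = bund.p (gpd.r γ) → bund.p t' = bund.p (gpd.s γ) →
    actR (actL t γ) t' = actL t (actR γ t')
  -- (1a): `t ▶ u = u ◀ t` for units `u`
  unit_act : ∀ u t, bund.p t = bund.p u → actL t (gpd.unit u) = actR (gpd.unit u) t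
  -- (1b): `r(t ▶ γ) = t ▶ r(γ)` and `s(η ◀ t) = s(η) ◀ t`
  r_actL : ∀ t γ, bund.p t = bund.p (gpd.r γ) →
    gpd.unit (gpd.r (actL t γ)) = actL t (gpd.unit (gpd.r γ))
  s_actR : ∀ γ t, bund.p t = bund.p (gpd.s γ) →
    gpd.unit (gpd.s (actR γ t)) = actR (gpd.unit (gpd.s γ)) t
  -- `λ_η : T_{p_s(η)} → T_{p_r(η)}` and `ρ_η : T_{p_r(η)} → T_{p_s(η)}`
  lam_p : ∀ η t, bund.p t = bund.p (gpd.s η) → bund.p (lam η t) = bund.p (gpd.r η)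
  rho_p : ∀ η t, bund.p t = bund.p (gpd.r η) → bund.p (rho η t) = bund.p (gpd.s η)
  -- (2a)–(2f)
  spec_a : ∀ η t, bund.p t = bund.p (gpd.s η) → actR η t = actL (lam η t) η
  spec_b : ∀ η t, bund.p t = bund.p (gpd.r η) → actL t η = actR η (rho η t)
  spec_c : ∀ γ η t, gpd.s γ = gpd.r η → bund.p t = bund.p (gpd.s η) →
    actR (gpd.mul γ η) t = gpd.mul (actR γ (lam η t)) (actR η t)
  spec_d : ∀ γ η t, gpd.s γ = gpd.r η → bund.p t = bund.p (gpd.r γ) →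
    actL t (gpd.mul γ η) = gpd.mul (actL t γ) (actL (rho γ t) η)
  spec_e : ∀ η t, bund.p t = bund.p (gpd.s η) → gpd.inv (actR η t) = actL t (gpd.inv η)
  spec_f : ∀ η t, bund.p t = bund.p (gpd.r η) → gpd.inv (actL t η) = actR (gpd.inv η) t

namespace Assumption51

variable {H : Type u} {U : Type v} {X : Type w} (A : Assumption51 H U X)

/-- The moment map `p ∘ r`. -/
def pr (γ : H) : X := A.bund.p (A.gpd.r γ)

/-- The moment map `p ∘ s`. -/
def ps (γ : H) : X := A.bund.p (A.gpd.s γ)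

/-- The orbit `[γ] = {γ ◀ t : t ∈ T_{p_s(γ)}}` of `γ` under the right `T`-action. -/
def orbit (γ : H) : Set H := {η | ∃ t : U, A.bund.p t = A.ps γ ∧ η = A.actR γ t}

/-- The orbit of `γ` under the left `T`-action. -/
def orbitL (γ : H) : Set H := {η | ∃ t : U, A.bund.p t = A.pr γ ∧ η = A.actL t γ}

/-- The product `[γ][η]` of two `T`-orbits: all products of composable representatives. -/
def classProd (γ η : H) : Set H :=
  {ξ | ∃ γ' ∈ A.orbit γ, ∃ η' ∈ A.orbit η, A.gpd.s γ' = A.gpd.r η' ∧ ξ = A.gpd.mul γ' η'}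

end Assumption51

lemma RawGroupoid.unit_injective {H : Type u} {U : Type v} (G : RawGroupoid H U) :
    Function.Injective G.unit := fun x y h => by
  rw [← G.r_unit x, h, G.r_unit]

namespace AbGroupBundle

variable {T : Type u} {X : Type v} (B : AbGroupBundle T X)

lemma bmul_e (t : T) : B.bmul t (B.e (B.p t)) = t := by
  rw [B.bmul_comm t _ (B.p_e _).symm, B.e_bmul]

lemma bmul_binv (t : T) : B.bmul t (B.binv t) = B.e (B.p t) := by
  rw [B.bmul_comm t _ (B.p_binv t).symm, B.binv_bmul]

lemma eq_of_bmul_binv_eq_e {a c : T} (hac : B.p a = B.p c)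
    (h : B.bmul c (B.binv a) = B.e (B.p a)) : c = a :=
  calc c = B.bmul c (B.bmul (B.binv a) a) := by rw [B.binv_bmul, hac, B.bmul_e]
    _ = B.bmul (B.bmul c (B.binv a)) a :=
      (B.bmul_assoc c _ a (by rw [B.p_binv, hac]) (B.p_binv a)).symm
    _ = a := by rw [h, B.e_bmul]

end AbGroupBundle

namespace Assumption51

variable {H : Type u} {U : Type v} {X : Type w} (A : Assumption51 H U X)

lemma actR_actR_binv {γ : H} {t : U} (ht : A.bund.p t = A.ps γ) :
    A.actR (A.actR γ t) (A.bund.binv t) = γ := by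
  rw [← A.actR_mul γ t _ ht (A.bund.p_binv t), A.bund.bmul_binv, ht]
  exact A.actR_id γ

lemma actR_injective {γ : H} {a c : U} (ha : A.bund.p a = A.ps γ)
    (hc : A.bund.p c = A.ps γ) (h : A.actR γ a = A.actR γ c) : a = c := by
  have hca : A.bund.p (A.bund.binv a) = A.bund.p c := by rw [A.bund.p_binv, ha, hc]
  have hfix : A.actR γ (A.bund.bmul c (A.bund.binv a)) = γ := by
    rw [A.actR_mul γ c _ hc hca, ← h, A.actR_actR_binv ha]
  have hfree := A.actR_free γ _ (by rw [A.bund.p_bmul _ _ hca.symm, hca, hc]; rfl) hfix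
  exact (A.bund.eq_of_bmul_binv_eq_e (ha.trans hc.symm) (by rw [hfree, ha]; rfl)).symm

lemma s_actR_injective {γ : H} {a c : U} (ha : A.bund.p a = A.ps γ)
    (hc : A.bund.p c = A.ps γ) (h : A.gpd.s (A.actR γ a) = A.gpd.s (A.actR γ c)) :
    a = c := by
  have hsu : A.ps (A.gpd.unit (A.gpd.s γ)) = A.ps γ := by rw [ps, ps, A.gpd.s_unit]
  refine A.actR_injective (γ := A.gpd.unit (A.gpd.s γ)) (ha.trans hsu.symm)
    (hc.trans hsu.symm) ?_
  rw [← A.s_actR γ a ha, ← A.s_actR γ c hc, h]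

lemma ps_eq_of_mem_orbit {γ η : H} (h : η ∈ A.orbit γ) : A.ps η = A.ps γ := by
  obtain ⟨t, ht, rfl⟩ := h
  rw [ps, A.ps_actR γ t ht, ht]

lemma mem_orbit_self (γ : H) : γ ∈ A.orbit γ :=
  ⟨A.bund.e (A.ps γ), A.bund.p_e _, (A.actR_id γ).symm⟩

lemma mem_orbit_trans {γ η ζ : H} (h₁ : η ∈ A.orbit γ) (h₂ : ζ ∈ A.orbit η) :
    ζ ∈ A.orbit γ := by
  obtain ⟨t, ht, rfl⟩ := h₁
  obtain ⟨u, hu, rfl⟩ := h₂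
  have hut : A.bund.p u = A.bund.p t := by rw [hu, A.ps_eq_of_mem_orbit ⟨t, ht, rfl⟩, ht]
  exact ⟨A.bund.bmul t u, by rw [A.bund.p_bmul t u hut.symm, hut, ht],
    (A.actR_mul γ t u ht hut).symm⟩

lemma mem_orbit_symm {γ η : H} (h : η ∈ A.orbit γ) : γ ∈ A.orbit η := by
  obtain ⟨t, ht, rfl⟩ := h
  exact ⟨A.bund.binv t, by rw [A.bund.p_binv, A.ps_eq_of_mem_orbit ⟨t, ht, rfl⟩, ht],
    (A.actR_actR_binv ht).symm⟩

lemma orbit_eq_of_mem {γ η : H} (h : η ∈ A.orbit γ) : A.orbit η = A.orbit γ :=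
  Set.ext fun _ => ⟨A.mem_orbit_trans h, A.mem_orbit_trans (A.mem_orbit_symm h)⟩

lemma p_lam_eq_ps {γ η : H} (h : A.gpd.s γ = A.gpd.r η) {t : U}
    (ht : A.bund.p t = A.ps η) : A.bund.p (A.lam η t) = A.ps γ := by
  rw [A.lam_p η t ht, ps, h]

lemma s_actR_lam_eq_r_actR {γ η : H} (h : A.gpd.s γ = A.gpd.r η) {t : U}
    (ht : A.bund.p t = A.ps η) :
    A.gpd.s (A.actR γ (A.lam η t)) = A.gpd.r (A.actR η t) := by
  have hl : A.bund.p (A.lam η t) = A.bund.p (A.gpd.r η) := A.lam_p η t ht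
  apply A.gpd.unit_injective
  rw [A.s_actR γ _ (A.p_lam_eq_ps h ht), A.spec_a η t ht, A.r_actL _ η hl,
    A.unit_act _ _ hl, h]

/-- By freeness, `γ ◀ λ_η(b)` is the only translate of `γ` composable with `η ◀ b`, so (2c)
accounts for every product of translates. -/
lemma mul_actR_eq_actR_mul {γ η : H} (h : A.gpd.s γ = A.gpd.r η) {a b : U}
    (ha : A.bund.p a = A.ps γ) (hb : A.bund.p b = A.ps η)
    (hab : A.gpd.s (A.actR γ a) = A.gpd.r (A.actR η b)) :
    A.gpd.mul (A.actR γ a) (A.actR η b) = A.actR (A.gpd.mul γ η) b := by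
  have hlam : a = A.lam η b := A.s_actR_injective ha (A.p_lam_eq_ps h hb)
    (hab.trans (A.s_actR_lam_eq_r_actR h hb).symm)
  rw [hlam, A.spec_c γ η b h hb]

lemma classProd_eq_orbit_mul {γ η : H} (h : A.gpd.s γ = A.gpd.r η) :
    A.classProd γ η = A.orbit (A.gpd.mul γ η) := by
  have hps : A.ps (A.gpd.mul γ η) = A.ps η := by rw [ps, A.gpd.s_mul γ η h, ps]
  ext ξ
  constructor
  · rintro ⟨_, ⟨a, ha, rfl⟩, _, ⟨b, hb, rfl⟩, hab, rfl⟩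
    exact ⟨b, hb.trans hps.symm, A.mul_actR_eq_actR_mul h ha hb hab⟩
  · rintro ⟨t, ht, rfl⟩
    have ht' : A.bund.p t = A.ps η := ht.trans hps
    exact ⟨_, ⟨_, A.p_lam_eq_ps h ht', rfl⟩, _, ⟨t, ht', rfl⟩,
      A.s_actR_lam_eq_r_actR h ht', A.spec_c γ η t h ht'⟩

lemma classProd_congr {γ η γ' η' : H} (hγ : γ' ∈ A.orbit γ) (hη : η' ∈ A.orbit η) :
    A.classProd γ η = A.classProd γ' η' := by
  simp only [classProd, A.orbit_eq_of_mem hγ, A.orbit_eq_of_mem hη]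

lemma image_inv_orbit (γ : H) : A.gpd.inv '' A.orbit γ = A.orbit (A.gpd.inv γ) := by
  ext ξ
  constructor
  · rintro ⟨_, ⟨t, ht, rfl⟩, rfl⟩
    have ht' : A.bund.p t = A.bund.p (A.gpd.r (A.gpd.inv γ)) := by rw [A.gpd.r_inv]; exact ht
    exact ⟨A.rho _ t, A.rho_p _ t ht', by rw [A.spec_e γ t ht, A.spec_b _ t ht']⟩
  · rintro ⟨u, hu, rfl⟩
    have hu' : A.bund.p u = A.bund.p (A.gpd.r γ) := by rw [hu, ps, A.gpd.s_inv]
    exact ⟨A.actL u γ, ⟨A.rho γ u, A.rho_p γ u hu', A.spec_b γ u hu'⟩, A.spec_f γ u hu'⟩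

end Assumption51

/-- Proposition 5.6 (algebraic part): under Assumption 5.1, `H/T` is a groupoid.  The product
`[γ][η]` of two composable classes is again a single `T`-orbit (namely `[γ'η']` for any choice
of composable representatives, so it is well defined), inversion `[γ]⁻¹ = [γ⁻¹]` is well
defined, composition is associative, and `r([γ]) = [r(γ)]`, `s([γ]) = [s(γ)]`, and
`[γ][γ]⁻¹[γ] = [γ]`. -/
theorem prop56 {H : Type u} {U : Type v} {X : Type w} (A : Assumption51 H U X) :
    -- the composition is well defined: `[γ][η] = [γ'η']` for composable representatives
    (∀ γ η γ' η', γ' ∈ A.orbit γ → η' ∈ A.orbit η → A.gpd.s γ' = A.gpd.r η' →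
        A.classProd γ η = A.orbit (A.gpd.mul γ' η')) ∧
    -- inversion is well defined: `[γ]⁻¹ = [γ⁻¹]`
    (∀ γ : H, A.gpd.inv '' A.orbit γ = A.orbit (A.gpd.inv γ)) ∧
    -- associativity
    (∀ γ η ζ, A.gpd.s γ = A.gpd.r η → A.gpd.s η = A.gpd.r ζ →
        A.classProd (A.gpd.mul γ η) ζ = A.classProd γ (A.gpd.mul η ζ)) ∧
    -- `r([γ]) = [γ][γ]⁻¹ = [r(γ)]` and `s([γ]) = [γ]⁻¹[γ] = [s(γ)]`
    (∀ γ : H, A.classProd γ (A.gpd.inv γ) = A.orbit (A.gpd.unit (A.gpd.r γ))) ∧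
    (∀ γ : H, A.classProd (A.gpd.inv γ) γ = A.orbit (A.gpd.unit (A.gpd.s γ))) ∧
    -- `[γ][γ]⁻¹[γ] = [γ]`
    (∀ γ : H, A.classProd (A.gpd.mul γ (A.gpd.inv γ)) γ = A.orbit γ) := by
  have hinv (γ : H) : A.gpd.s γ = A.gpd.r (A.gpd.inv γ) := (A.gpd.r_inv γ).symm
  refine ⟨fun γ η γ' η' hγ hη hc => ?_, A.image_inv_orbit, ?_, ?_, ?_, ?_⟩
  · rw [A.classProd_congr hγ hη, A.classProd_eq_orbit_mul hc]
  · intro γ η ζ h₁ h₂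
    rw [A.classProd_eq_orbit_mul (by rw [A.gpd.s_mul γ η h₁, h₂]),
      A.classProd_eq_orbit_mul (by rw [A.gpd.r_mul η ζ h₂, h₁]), A.gpd.mul_assoc γ η ζ h₁ h₂]
  · intro γ
    rw [A.classProd_eq_orbit_mul (hinv γ), A.gpd.mul_inv]
  · intro γ
    rw [A.classProd_eq_orbit_mul (A.gpd.s_inv γ), A.gpd.inv_mul]
  · intro γ
    rw [A.classProd_eq_orbit_mul (by rw [A.gpd.s_mul _ _ (hinv γ), A.gpd.s_inv]),
      A.gpd.mul_inv, A.gpd.unit_mul]
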